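/- arXiv:2008.03076 — 3 statements merged into one kernel-verified Lean document; each statement's English description precedes it below -/
import Mathlib

section
/- Fix a cylinder function h : {0,1}^{ℤ^d} → ℝ. There exists a finite constant C₀, depending only on h, such that ∫ ( n^{−d/2} Σ_{x∈T^d_n} J_x ( h(τ_x η) − ~h(ρ) ) )² f dν^n_ρ ≤ C₀ ( H_n(f) + 1 ) ‖J‖²_∞ for every function J : T^d_n → ℝ, every density f with respect to ν^n_ρ, and every n large enough that the support of h fits in a cube of side n, where ‖J‖_∞ = max_x |J(x)|. -/
open Finset

/-- The discrete torus `(ℤ/nℤ)^d`. -/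
abbrev Torus (d n : ℕ) := Fin d → ZMod n

/-- Particle configurations on the discrete torus. -/
abbrev Cfg (d n : ℕ) := Torus d n → Bool

/-- Particle configurations on `ℤ^d`. -/
abbrev ZCfg (d : ℕ) := (Fin d → ℤ) → Bool

/-- Real (0/1) value of a configuration at a site. -/
noncomputable def cval {d n : ℕ} (η : Cfg d n) (x : Torus d n) : ℝ :=
  if η x then 1 else 0

/-- Real (0/1) value of a `ℤ^d` configuration at a site. -/
noncomputable def zval {d : ℕ} (η : ZCfg d) (z : Fin d → ℤ) : ℝ :=
  if η z then 1 else 0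

/-- The Bernoulli(ρ) product weight of a configuration. -/
noncomputable def bern (d n : ℕ) [NeZero n] (ρ : ℝ) (η : Cfg d n) : ℝ :=
  ∏ x : Torus d n, (if η x then ρ else 1 - ρ)

/-- Expectation with respect to the Bernoulli(ρ) product measure `ν^n_ρ`. -/
noncomputable def expect (d n : ℕ) [NeZero n] (ρ : ℝ) (f : Cfg d n → ℝ) : ℝ :=
  ∑ η : Cfg d n, bern d n ρ η * f η

/-- A density with respect to `ν^n_ρ`. -/
def IsDensity (d n : ℕ) [NeZero n] (ρ : ℝ) (f : Cfg d n → ℝ) : Prop :=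
  (∀ η, 0 ≤ f η) ∧ expect d n ρ f = 1

/-- Relative entropy `H_n(f) = ∫ f log f dν^n_ρ`. -/
noncomputable def entropy (d n : ℕ) [NeZero n] (ρ : ℝ) (f : Cfg d n → ℝ) : ℝ :=
  expect d n ρ (fun η => f η * Real.log (f η))

/-- Sup norm of a function on the discrete torus. -/
noncomputable def supNorm {d n : ℕ} [NeZero n] (F : Torus d n → ℝ) : ℝ :=
  ⨆ x : Torus d n, |F x|

/-- The canonical unit vector `e_j` of the torus. -/
def unitT (d n : ℕ) (j : Fin d) : Torus d n := fun i => if i = j then 1 else 0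

/-- The canonical unit vector `e_j` of `ℤ^d`. -/
def unitZ (d : ℕ) (j : Fin d) : Fin d → ℤ := fun i => if i = j then 1 else 0

/-- `σ^x η` : flip the value of the configuration at `x`. -/
def flipCfg {d n : ℕ} (x : Torus d n) (η : Cfg d n) : Cfg d n :=
  Function.update η x (!η x)

/-- `σ^{x,y} η` : exchange the values of the configuration at `x` and `y`. -/
def swapCfg {d n : ℕ} (x y : Torus d n) (η : Cfg d n) : Cfg d n :=
  fun z => if z = x then η y else if z = y then η x else η z

/-- `τ_x η` : translation of a torus configuration. -/
def shiftCfg {d n : ℕ} (x : Torus d n) (η : Cfg d n) : Cfg d n := fun z => η (x + z)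

/-- Canonical projection `ℤ^d → (ℤ/nℤ)^d`. -/
def toTorus {d n : ℕ} (z : Fin d → ℤ) : Torus d n := fun i => ((z i : ℤ) : ZMod n)

/-- Periodic identification of a torus configuration with a `ℤ^d` configuration. -/
def liftCfg {d n : ℕ} (η : Cfg d n) : ZCfg d := fun z => η (toTorus z)

/-- `τ_y η` : translation of a `ℤ^d` configuration. -/
def zshift {d : ℕ} (y : Fin d → ℤ) (η : ZCfg d) : ZCfg d := fun z => η (y + z)

/-- flip the value of a `ℤ^d` configuration at `z`. -/
def zflip {d : ℕ} (z : Fin d → ℤ) (η : ZCfg d) : ZCfg d :=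
  Function.update η z (!η z)

/-- A cylinder function on `{0,1}^{ℤ^d}` : a function depending only on the
(finitely many) coordinates in `supp`. -/
structure CylFun (d : ℕ) where
  supp : Finset (Fin d → ℤ)
  toFun : ZCfg d → ℝ
  cyl : ∀ η ζ : ZCfg d, (∀ z ∈ supp, η z = ζ z) → toFun η = toFun ζ

/-- `~h(ρ)` : expectation of a cylinder function under the Bernoulli(ρ) product
measure on `{0,1}^{ℤ^d}` (computed over its support). -/
noncomputable def CylFun.tilde {d : ℕ} (h : CylFun d) (ρ : ℝ) : ℝ :=
  ∑ σ : {z // z ∈ h.supp} → Bool,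
    (∏ z : {z // z ∈ h.supp}, if σ z then ρ else 1 - ρ) *
      h.toFun (fun z => if hz : z ∈ h.supp then σ ⟨z, hz⟩ else false)

/-- `S` is contained in a cube of side `n` (so that periodic identification on the
torus of side `n` is faithful on `S`). -/
def FitsCube (d : ℕ) (S : Finset (Fin d → ℤ)) (n : ℕ) : Prop :=
  ∃ a : Fin d → ℤ, ∀ z ∈ S, ∀ i, a i ≤ z i ∧ z i < a i + (n : ℤ)

/-- `c(τ_x η)` : a cylinder function evaluated on the translate of a torus
configuration, via periodic identification. -/
noncomputable def cylAt {d n : ℕ} (c : CylFun d) (x : Torus d n) (η : Cfg d n) : ℝ :=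
  c.toFun (liftCfg (shiftCfg x η))

/-- The speed-change exclusion generator `L^S_n`. -/
noncomputable def genS (d n : ℕ) [NeZero n] (c : Fin d → CylFun d)
    (h : Cfg d n → ℝ) (η : Cfg d n) : ℝ :=
  ∑ x : Torus d n, ∑ j : Fin d,
    cylAt (c j) x η * (h (swapCfg x (x + unitT d n j) η) - h η)

/-- The voter generator `L^V_n` (the sum over the neighbours `y` of `x` being the
sum over `y = x ± e_j`, `1 ≤ j ≤ d`). -/
noncomputable def genV (d n : ℕ) [NeZero n] (h : Cfg d n → ℝ) (η : Cfg d n) : ℝ :=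
  ∑ x : Torus d n, ∑ j : Fin d,
    ((cval η (x + unitT d n j) - cval η x) ^ 2 * (h (flipCfg x η) - h η)
      + (cval η (x - unitT d n j) - cval η x) ^ 2 * (h (flipCfg x η) - h η))

/-- The adjoint in `L²(ν^n_ρ)` of a linear operator on functions on `Ω_n`. -/
noncomputable def adjoint (d n : ℕ) [NeZero n] (ρ : ℝ)
    (L : (Cfg d n → ℝ) → Cfg d n → ℝ) (g : Cfg d n → ℝ) (η : Cfg d n) : ℝ :=
  (∑ ζ : Cfg d n, bern d n ρ ζ * g ζ * L (fun ξ => if ξ = η then 1 else 0) ζ)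
    / bern d n ρ η

/-- The Dirichlet form `I_n(f)`. -/
noncomputable def dirichlet (d n : ℕ) [NeZero n] (ρ : ℝ) (c : Fin d → CylFun d)
    (f : Cfg d n → ℝ) : ℝ :=
  (1 / 2) * ∑ j : Fin d, ∑ x : Torus d n,
    expect d n ρ (fun η =>
      cylAt (c j) x η *
        (Real.sqrt (f (swapCfg x (x + unitT d n j) η)) - Real.sqrt (f η)) ^ 2)

/-- The sequence `R_d(n)`. -/
noncomputable def Rd (d n : ℕ) (a : ℝ) : ℝ :=
  if d = 1 then Real.sqrt a
  else if d = 2 then a * Real.log (n : ℝ)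
  else a * (n : ℝ) ^ (d - 2)

/-- The sequence `g_d(ℓ)`. -/
noncomputable def gd (d ℓ : ℕ) : ℝ :=
  if d = 1 then (ℓ : ℝ) else if d = 2 then Real.log (ℓ : ℝ) else 1

/-- `ω_x = (η_x - ρ)/√(ρ(1-ρ))`. -/
noncomputable def omega (d n : ℕ) [NeZero n] (ρ : ℝ) (η : Cfg d n) (x : Torus d n) : ℝ :=
  (cval η x - ρ) / Real.sqrt (ρ * (1 - ρ))

/-- `ω_{x+B} = ∏_{z ∈ B} ω_{x+z}`. -/
noncomputable def omegaProd (d n : ℕ) [NeZero n] (ρ : ℝ) (B : Finset (Fin d → ℤ))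
    (η : Cfg d n) (x : Torus d n) : ℝ :=
  ∏ z ∈ B, omega d n ρ η (x + toTorus z)

/-- `V(η) = 2 Σ_j Σ_x ω_x ω_{x+e_j}`. -/
noncomputable def Vfun (d n : ℕ) [NeZero n] (ρ : ℝ) (η : Cfg d n) : ℝ :=
  2 * ∑ j : Fin d, ∑ x : Torus d n, omega d n ρ η x * omega d n ρ η (x + unitT d n j)

/-- The cube `Λ_ℓ = {0,…,ℓ-1}^d ⊂ ℤ^d`. -/
noncomputable def box (d ℓ : ℕ) : Finset (Fin d → ℤ) :=
  Fintype.piFinset fun _ => Finset.Ico (0 : ℤ) (ℓ : ℤ)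

/-- The uniform measure `m_ℓ` on `Λ_ℓ`. -/
noncomputable def mker (d ℓ : ℕ) (z : Fin d → ℤ) : ℝ :=
  if z ∈ box d ℓ then ((ℓ : ℝ) ^ d)⁻¹ else 0

/-- The convolution `m^{(2)}_ℓ = m_ℓ ∗ m_ℓ`. -/
noncomputable def m2ker (d ℓ : ℕ) (z : Fin d → ℤ) : ℝ :=
  ∑ y ∈ box d ℓ, mker d ℓ y * mker d ℓ (z - y)

/-- `ω^ℓ_x = Σ_y m^{(2)}_ℓ(y) ω_{x+y}`. -/
noncomputable def omegaL (d n : ℕ) [NeZero n] (ρ : ℝ) (ℓ : ℕ) (η : Cfg d n)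
    (x : Torus d n) : ℝ :=
  ∑ y ∈ box d (2 * ℓ - 1), m2ker d ℓ y * omega d n ρ η (x + toTorus y)

/-- `V_ℓ(η) = 2 Σ_j Σ_x ω_x ω^ℓ_{x+e_j}`. -/
noncomputable def VfunL (d n : ℕ) [NeZero n] (ρ : ℝ) (ℓ : ℕ) (η : Cfg d n) : ℝ :=
  2 * ∑ j : Fin d, ∑ x : Torus d n, omega d n ρ η x * omegaL d n ρ ℓ η (x + unitT d n j)

/-- The ℓ¹ norm on `ℤ^d`. -/
def norm1 {d : ℕ} (z : Fin d → ℤ) : ℤ := ∑ i, |z i|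

/-- `xA` is a maximal element of `A` for the coordinatewise partial order. -/
def IsMaximalIn {d : ℕ} (A : Finset (Fin d → ℤ)) (xA : Fin d → ℤ) : Prop :=
  xA ∈ A ∧ ∀ y ∈ A, (∀ i, xA i ≤ y i) → y = xA

/-- `H^{(ℓ)}_{k,x}` built from a flow `Φ`. -/
noncomputable def Hflow (d n : ℕ) [NeZero n] (ρ : ℝ) (ℓ : ℕ)
    (Φ : (Fin d → ℤ) → (Fin d → ℤ) → ℝ) (A : Finset (Fin d → ℤ)) (xA : Fin d → ℤ)
    (G : Torus d n → ℝ) (k : Fin d) (x : Torus d n) (η : Cfg d n) : ℝ :=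
  ∑ y ∈ (box d (2 * ℓ - 1)).filter (fun y => y + unitZ d k ∈ box d (2 * ℓ - 1)),
    Φ y (y + unitZ d k) * G (x - toTorus xA - toTorus y) *
      omegaProd d n ρ (A.erase xA) η (x - toTorus xA - toTorus y)

/-!
Write the field as `X = ∑ₓ aₓ ξₓ` with `aₓ = n^{-d/2} Jₓ` and `ξₓ = h(τₓη) - h̃(ρ)`. The
pointwise inequality `u v ≤ u log u - u + eᵛ` gives `γ ∫ X² f dν ≤ H(f) - 1 + ∫ exp (γ X²) dν`,
so it suffices to show `∫ exp (γ X²) dν ≤ 2` for some `γ⁻¹ = O(‖J‖²_∞)`.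

Colour the torus with `K = |supp h|² + 1` colours so that equally coloured sites have disjoint
translated supports. Within one colour class the `ξₓ` are then independent, centred and bounded
by `2 sup |h|`, so by Hoeffding's lemma their weighted sum `Y` is sub-Gaussian with variance proxy
`c = (2 sup |h|)² ‖J‖²_∞`; comparing moments, `∫ exp (Y² / (2 e c)) dν ≤ 2`. Since `X` is the sum
of the `K` class sums, Cauchy–Schwarz and the convexity of `exp` give the bound for
`γ = 1 / (2 e c K²)`.
-/

open Real Pointwise

theorem Real.mul_add_le_mul_log_add_exp {u : ℝ} (hu : 0 ≤ u) (v : ℝ) :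
    u * v + u ≤ u * log u + exp v := by
  rcases hu.eq_or_lt with rfl | hu
  · simpa using (exp_pos v).le
  · have key : exp v = u * exp (v - log u) := by rw [exp_sub, exp_log hu]; field_simp
    nlinarith [add_one_le_exp (v - log u)]

theorem Real.pow_two_mul_div_factorial_le_cosh (x : ℝ) (m : ℕ) :
    x ^ (2 * m) / (2 * m).factorial ≤ cosh x :=
  le_hasSum (hasSum_cosh x) m fun j _ => by
    rw [pow_mul]; positivity

theorem Real.exp_div_sq_mul_sq_sum_le {κ : Type*} [Fintype κ] [Nonempty κ] {β : ℝ} (hβ : 0 ≤ β)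
    (y : κ → ℝ) :
    exp (β / Fintype.card κ ^ 2 * (∑ k, y k) ^ 2)
      ≤ (Fintype.card κ : ℝ)⁻¹ * ∑ k, exp (β * y k ^ 2) := by
  have hK : (0 : ℝ) < Fintype.card κ := by exact_mod_cast Fintype.card_pos
  have hcs : (∑ k, y k) ^ 2 ≤ Fintype.card κ * ∑ k, y k ^ 2 := by
    simpa using sq_sum_le_card_mul_sum_sq (s := Finset.univ) (f := y)
  have hjensen := convexOn_exp.map_sum_le (t := Finset.univ) (w := fun _ => (Fintype.card κ : ℝ)⁻¹)
    (p := fun k => β * y k ^ 2) (fun _ _ => by positivity) (by simp [hK.ne'])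
    (fun _ _ => Set.mem_univ _)
  simp only [smul_eq_mul, ← Finset.mul_sum] at hjensen
  refine le_trans (exp_le_exp.2 ?_) hjensen
  calc β / Fintype.card κ ^ 2 * (∑ k, y k) ^ 2
      ≤ β / Fintype.card κ ^ 2 * (Fintype.card κ * ∑ k, y k ^ 2) := by gcongr
    _ = (Fintype.card κ : ℝ)⁻¹ * (β * ∑ k, y k ^ 2) := by field_simp

theorem SimpleGraph.colorable_of_degree_lt {V : Type*} [Fintype V] [DecidableEq V]
    (G : SimpleGraph V) [DecidableRel G.Adj] {K : ℕ} (hdeg : ∀ v, G.degree v < K) :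
    G.Colorable K := by
  suffices ∀ s : Finset V, ∃ c : V → Fin K, ∀ x ∈ s, ∀ y ∈ s, G.Adj x y → c x ≠ c y by
    obtain ⟨c, hc⟩ := this Finset.univ
    exact ⟨Coloring.mk c fun hxy => hc _ (Finset.mem_univ _) _ (Finset.mem_univ _) hxy⟩
  intro s
  induction s using Finset.induction_on with
  | empty => exact ⟨fun v => ⟨0, (Nat.zero_le _).trans_lt (hdeg v)⟩, by simp⟩
  | @insert a s ha ih =>
    obtain ⟨c, hc⟩ := ih
    obtain ⟨k, -, hk⟩ := Finset.exists_mem_notMem_of_card_lt_card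
      (s := (G.neighborFinset a).image c) (t := Finset.univ)
      (by simpa using Finset.card_image_le.trans_lt (hdeg a))
    have hfree : ∀ y ∈ s, G.Adj a y → c y ≠ k := fun y _ hay hyk =>
      hk (Finset.mem_image.2 ⟨y, (G.mem_neighborFinset a y).2 hay, hyk⟩)
    refine ⟨Function.update c a k, ?_⟩
    simp only [Finset.mem_insert]
    rintro x (rfl | hx) y (rfl | hy) hxy
    · exact absurd hxy G.irrefl
    · rw [Function.update_self, Function.update_of_ne (ne_of_mem_of_not_mem hy ha)]
      exact (hfree y hy hxy).symm
    · rw [Function.update_self, Function.update_of_ne (ne_of_mem_of_not_mem hx ha)]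
      exact hfree x hx hxy.symm
    · rw [Function.update_of_ne (ne_of_mem_of_not_mem hx ha),
        Function.update_of_ne (ne_of_mem_of_not_mem hy ha)]
      exact hc x hx y hy hxy

theorem exists_coloring_disjoint_vadd {G : Type*} [AddGroup G] [Fintype G] [DecidableEq G]
    (S : Finset G) {K : ℕ} (hK : S.card ^ 2 < K) :
    ∃ c : G → Fin K, ∀ x y, c x = c y → x ≠ y → Disjoint (x +ᵥ S) (y +ᵥ S) := by
  let overlap := SimpleGraph.fromRel fun x y : G => ¬ Disjoint (x +ᵥ S) (y +ᵥ S)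
  have hdeg : ∀ x, overlap.degree x < K := by
    intro x
    refine lt_of_le_of_lt ?_ hK
    calc overlap.degree x ≤ ((S ×ˢ S).image fun p => x + p.1 - p.2).card := by
          rw [← SimpleGraph.card_neighborFinset_eq_degree]
          refine Finset.card_le_card fun y hy => ?_
          have hover : ¬ Disjoint (x +ᵥ S) (y +ᵥ S) := by
            rcases ((SimpleGraph.fromRel_adj _ _ _).1
              ((overlap.mem_neighborFinset _ _).1 hy)).2 with hxy | hyx
            exacts [hxy, fun hd => hyx hd.symm]
          obtain ⟨_, hx', hy'⟩ := Finset.not_disjoint_iff.1 hover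
          obtain ⟨s, hs, rfl⟩ := Finset.mem_vadd_finset.1 hx'
          obtain ⟨s', hs', hss'⟩ := Finset.mem_vadd_finset.1 hy'
          exact Finset.mem_image.2
            ⟨(s, s'), Finset.mem_product.2 ⟨hs, hs'⟩, (eq_sub_of_add_eq hss').symm⟩
      _ ≤ S.card ^ 2 := Finset.card_image_le.trans (by rw [Finset.card_product, sq])
  obtain ⟨C⟩ := overlap.colorable_of_degree_lt hdeg
  refine ⟨C, fun x y hxy hne => not_not.1 fun hover => C.valid ?_ hxy⟩
  exact (SimpleGraph.fromRel_adj _ _ _).2 ⟨hne, Or.inl hover⟩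

section BernoulliProduct

variable {ι : Type*} [Fintype ι] {ρ : ℝ}

noncomputable def bernoulliWeight (ρ : ℝ) (η : ι → Bool) : ℝ :=
  ∏ i, if η i then ρ else 1 - ρ

theorem bernoulliWeight_nonneg (h0 : 0 ≤ ρ) (h1 : ρ ≤ 1) (η : ι → Bool) :
    0 ≤ bernoulliWeight ρ η :=
  Finset.prod_nonneg fun i _ => by split_ifs <;> linarith

theorem bernoulliWeight_piEquivPiSubtypeProd_symm (p : ι → Prop) [DecidablePred p]
    (u : {i // p i} → Bool) (v : {i // ¬ p i} → Bool) :
    bernoulliWeight ρ ((Equiv.piEquivPiSubtypeProd p fun _ => Bool).symm (u, v))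
      = bernoulliWeight ρ u * bernoulliWeight ρ v := by
  rw [bernoulliWeight, ← Fintype.prod_subtype_mul_prod_subtype p]
  congr 1 <;> refine Finset.prod_congr rfl fun i _ => ?_ <;> simp [i.2]

variable [DecidableEq ι]

theorem sum_bernoulliWeight (ρ : ℝ) : ∑ η : ι → Bool, bernoulliWeight ρ η = 1 := by
  simp [bernoulliWeight, ← Fintype.prod_sum (fun (_ : ι) (b : Bool) => if b then ρ else 1 - ρ)]

/-- `expect d n ρ` and `CylFun.tilde · ρ` are, definitionally, `bernoulliExpect ρ` on
`Torus d n` and on the support of the cylinder function. -/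
noncomputable def bernoulliExpect (ρ : ℝ) (g : (ι → Bool) → ℝ) : ℝ :=
  ∑ η, bernoulliWeight ρ η * g η

theorem bernoulliExpect_add (f g : (ι → Bool) → ℝ) :
    bernoulliExpect ρ (fun η => f η + g η) = bernoulliExpect ρ f + bernoulliExpect ρ g := by
  simp only [bernoulliExpect, mul_add, Finset.sum_add_distrib]

theorem bernoulliExpect_const_mul (c : ℝ) (g : (ι → Bool) → ℝ) :
    bernoulliExpect ρ (fun η => c * g η) = c * bernoulliExpect ρ g := by
  simp only [bernoulliExpect, Finset.mul_sum, mul_left_comm]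

theorem bernoulliExpect_const (c : ℝ) : bernoulliExpect ρ (fun _ : ι → Bool => c) = c := by
  simp only [bernoulliExpect, ← Finset.sum_mul, sum_bernoulliWeight, one_mul]

theorem bernoulliExpect_sub_const (g : (ι → Bool) → ℝ) (c : ℝ) :
    bernoulliExpect ρ (fun η => g η - c) = bernoulliExpect ρ g - c := by
  simp only [sub_eq_add_neg, bernoulliExpect_add, bernoulliExpect_const]

theorem bernoulliExpect_sum {κ : Type*} (s : Finset κ) (g : κ → (ι → Bool) → ℝ) :
    bernoulliExpect ρ (fun η => ∑ k ∈ s, g k η) = ∑ k ∈ s, bernoulliExpect ρ (g k) := by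
  simp only [bernoulliExpect, Finset.mul_sum]
  exact Finset.sum_comm

theorem bernoulliExpect_mono (h0 : 0 ≤ ρ) (h1 : ρ ≤ 1) {f g : (ι → Bool) → ℝ}
    (hfg : ∀ η, f η ≤ g η) : bernoulliExpect ρ f ≤ bernoulliExpect ρ g :=
  Finset.sum_le_sum fun η _ => mul_le_mul_of_nonneg_left (hfg η) (bernoulliWeight_nonneg h0 h1 η)

theorem bernoulliExpect_nonneg (h0 : 0 ≤ ρ) (h1 : ρ ≤ 1) {g : (ι → Bool) → ℝ}
    (hg : ∀ η, 0 ≤ g η) : 0 ≤ bernoulliExpect ρ g :=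
  Finset.sum_nonneg fun η _ => mul_nonneg (bernoulliWeight_nonneg h0 h1 η) (hg η)

theorem abs_bernoulliExpect_le (h0 : 0 ≤ ρ) (h1 : ρ ≤ 1) {g : (ι → Bool) → ℝ} {M : ℝ}
    (hg : ∀ η, |g η| ≤ M) : |bernoulliExpect ρ g| ≤ M := by
  rw [abs_le]
  constructor
  · simpa only [bernoulliExpect_const] using
      bernoulliExpect_mono h0 h1 (f := fun _ => -M) fun η => (abs_le.1 (hg η)).1
  · simpa only [bernoulliExpect_const] using
      bernoulliExpect_mono h0 h1 (g := fun _ => M) fun η => (abs_le.1 (hg η)).2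

theorem bernoulliExpect_eq_sum_sum (p : ι → Prop) [DecidablePred p] (g : (ι → Bool) → ℝ) :
    bernoulliExpect ρ g = ∑ u : {i // p i} → Bool, ∑ v : {i // ¬ p i} → Bool,
      bernoulliWeight ρ u * bernoulliWeight ρ v
        * g ((Equiv.piEquivPiSubtypeProd p fun _ => Bool).symm (u, v)) := by
  rw [bernoulliExpect, ← (Equiv.piEquivPiSubtypeProd p fun _ => Bool).symm.sum_comp,
    Fintype.sum_prod_type]
  simp only [bernoulliWeight_piEquivPiSubtypeProd_symm]

theorem bernoulliExpect_mul_of_dependsOn {s : Set ι} {f g : (ι → Bool) → ℝ}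
    (hf : DependsOn f s) (hg : DependsOn g sᶜ) :
    bernoulliExpect ρ (fun η => f η * g η) = bernoulliExpect ρ f * bernoulliExpect ρ g := by
  classical
  let e := (Equiv.piEquivPiSubtypeProd (· ∈ s) fun _ => Bool).symm
  have split (φ : (ι → Bool) → ℝ) : bernoulliExpect ρ φ = ∑ u, ∑ v,
      bernoulliWeight ρ u * bernoulliWeight ρ v * φ (e (u, v)) :=
    bernoulliExpect_eq_sum_sum (· ∈ s) φ
  let F : ({i // i ∈ s} → Bool) → ℝ := fun u => f (e (u, fun _ => false))
  let G : ({i // i ∉ s} → Bool) → ℝ := fun v => g (e (fun _ => false, v))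
  have hfe : ∀ u v, f (e (u, v)) = F u := fun u v => hf fun i hi => by simp [e, hi]
  have hge : ∀ u v, g (e (u, v)) = G v := fun u v => hg fun i hi => by simp [e, show i ∉ s from hi]
  have hEf : bernoulliExpect ρ f = ∑ u, bernoulliWeight ρ u * F u := by
    rw [split]
    refine Finset.sum_congr rfl fun u _ => ?_
    simp_rw [hfe u, ← Finset.sum_mul, ← Finset.mul_sum, sum_bernoulliWeight, mul_one]
  have hEg : bernoulliExpect ρ g = ∑ v, bernoulliWeight ρ v * G v := by
    simp_rw [split, hge, mul_assoc, ← Finset.mul_sum,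
      ← Finset.sum_mul, sum_bernoulliWeight, one_mul]
  rw [split, hEf, hEg, Finset.sum_mul_sum]
  refine Finset.sum_congr rfl fun u _ => Finset.sum_congr rfl fun v _ => ?_
  rw [hfe, hge]
  ring

theorem bernoulliExpect_prod_of_dependsOn {κ : Type*} [DecidableEq κ] (B : Finset κ)
    (f : κ → (ι → Bool) → ℝ) (A : κ → Set ι) (hf : ∀ k ∈ B, DependsOn (f k) (A k))
    (hA : (B : Set κ).PairwiseDisjoint A) :
    bernoulliExpect ρ (fun η => ∏ k ∈ B, f k η) = ∏ k ∈ B, bernoulliExpect ρ (f k) := by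
  induction B using Finset.induction_on with
  | empty => simpa using bernoulliExpect_const (ι := ι) (ρ := ρ) 1
  | @insert a B ha ih =>
    have hrest : DependsOn (fun η => ∏ k ∈ B, f k η) (A a)ᶜ := fun η ζ hηζ =>
      Finset.prod_congr rfl fun k hk => hf k (Finset.mem_insert_of_mem hk) fun i hi =>
        hηζ i <| Set.disjoint_left.1 (hA (Finset.mem_insert_of_mem hk)
          (Finset.mem_insert_self a B) (ne_of_mem_of_not_mem hk ha)) hi
    simp only [Finset.prod_insert ha]
    rw [bernoulliExpect_mul_of_dependsOn (hf a (Finset.mem_insert_self a B)) hrest,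
      ih (fun k hk => hf k (Finset.mem_insert_of_mem hk))
        (hA.subset (by simp))]

theorem bernoulliExpect_comp_of_injective {κ : Type*} [Fintype κ] [DecidableEq κ] {φ : κ → ι}
    (hφ : Function.Injective φ) (g : (κ → Bool) → ℝ) :
    bernoulliExpect ρ (fun η => g (η ∘ φ)) = bernoulliExpect ρ g := by
  classical
  let r : κ ≃ {i // ∃ k, φ k = i} := Equiv.ofInjective φ hφ
  rw [bernoulliExpect_eq_sum_sum (fun i => ∃ k, φ k = i), bernoulliExpect]
  refine Fintype.sum_equiv (M := ℝ) (r.arrowCongr (Equiv.refl Bool)).symm _ _ fun u => ?_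
  have hcomp : ∀ v,
      (Equiv.piEquivPiSubtypeProd (fun i => ∃ k, φ k = i) fun _ => Bool).symm (u, v) ∘ φ
        = (r.arrowCongr (Equiv.refl Bool)).symm u := fun v => by
    funext k
    simp only [Function.comp_apply, Equiv.piEquivPiSubtypeProd_symm_apply,
      dif_pos (⟨k, rfl⟩ : ∃ j, φ j = φ k)]
    rfl
  simp_rw [hcomp, ← Finset.sum_mul, ← Finset.mul_sum, sum_bernoulliWeight, mul_one]
  congr 1
  exact (r.prod_comp fun a => if u a then ρ else 1 - ρ).symm

theorem bernoulliExpect_mul_le_of_exp_le (h0 : 0 ≤ ρ) (h1 : ρ ≤ 1) {f : (ι → Bool) → ℝ}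
    (hf : ∀ η, 0 ≤ f η) (hf1 : bernoulliExpect ρ f = 1) {Z : (ι → Bool) → ℝ} {γ : ℝ}
    (hγ : 0 < γ) (hZ : bernoulliExpect ρ (fun η => exp (γ * Z η)) ≤ 2) :
    bernoulliExpect ρ (fun η => Z η * f η)
      ≤ γ⁻¹ * (bernoulliExpect ρ (fun η => f η * log (f η)) + 1) := by
  have hent : bernoulliExpect ρ (fun η => γ * (Z η * f η)) + bernoulliExpect ρ f
      ≤ bernoulliExpect ρ (fun η => f η * log (f η))
        + bernoulliExpect ρ (fun η => exp (γ * Z η)) := by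
    rw [← bernoulliExpect_add, ← bernoulliExpect_add]
    exact bernoulliExpect_mono h0 h1 fun η =>
      (Real.mul_add_le_mul_log_add_exp (hf η) (γ * Z η)).trans_eq' (by ring)
  rw [bernoulliExpect_const_mul, hf1] at hent
  rw [le_inv_mul_iff₀ hγ]
  linarith

end BernoulliProduct

section Subgaussian

variable {ι : Type*} [Fintype ι] [DecidableEq ι] {ρ : ℝ}

def BernoulliSubgaussian (ρ : ℝ) (Y : (ι → Bool) → ℝ) (c : ℝ) : Prop :=
  ∀ t : ℝ, bernoulliExpect ρ (fun η => exp (t * Y η)) ≤ exp (c * t ^ 2 / 2)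

theorem bernoulliSubgaussian_of_abs_le (h0 : 0 ≤ ρ) (h1 : ρ ≤ 1) {Y : (ι → Bool) → ℝ} {L : ℝ}
    (hL : 0 < L) (hY : ∀ η, |Y η| ≤ L) (hmean : bernoulliExpect ρ Y = 0) :
    BernoulliSubgaussian ρ Y (L ^ 2) := by
  intro t
  -- `exp (t * y)` lies below its chord over `y ∈ [-L, L]`
  have hchord : ∀ η, exp (t * Y η) ≤ cosh (t * L) + sinh (t * L) / L * Y η := by
    intro η
    obtain ⟨hlo, hhi⟩ := abs_le.1 (hY η)
    have key := convexOn_exp.2 (Set.mem_univ (t * L)) (Set.mem_univ (-(t * L)))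
      (div_nonneg (by linarith) (by positivity) : 0 ≤ (L + Y η) / (2 * L))
      (div_nonneg (by linarith) (by positivity) : 0 ≤ (L - Y η) / (2 * L))
      (by field_simp; ring)
    simp only [smul_eq_mul] at key
    calc exp (t * Y η)
        = exp ((L + Y η) / (2 * L) * (t * L) + (L - Y η) / (2 * L) * -(t * L)) := by
          congr 1
          field_simp
          ring
      _ ≤ _ := key
      _ = cosh (t * L) + sinh (t * L) / L * Y η := by
          rw [cosh_eq, sinh_eq]
          field_simp
          ring
  calc bernoulliExpect ρ (fun η => exp (t * Y η))
      ≤ bernoulliExpect ρ (fun η => cosh (t * L) + sinh (t * L) / L * Y η) :=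
        bernoulliExpect_mono h0 h1 hchord
    _ = cosh (t * L) := by
        rw [bernoulliExpect_add, bernoulliExpect_const, bernoulliExpect_const_mul, hmean,
          mul_zero, add_zero]
    _ ≤ exp ((t * L) ^ 2 / 2) := cosh_le_exp_half_sq _
    _ = exp (L ^ 2 * t ^ 2 / 2) := by ring_nf

theorem BernoulliSubgaussian.const_mul {Y : (ι → Bool) → ℝ} {c : ℝ}
    (hY : BernoulliSubgaussian ρ Y c) (a : ℝ) :
    BernoulliSubgaussian ρ (fun η => a * Y η) (a ^ 2 * c) := fun t => by
  convert hY (t * a) using 3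
  · simp only [mul_assoc]
  · ring

theorem BernoulliSubgaussian.mono {Y : (ι → Bool) → ℝ} {c c' : ℝ}
    (hY : BernoulliSubgaussian ρ Y c) (hc : c ≤ c') : BernoulliSubgaussian ρ Y c' := fun t =>
  (hY t).trans (exp_le_exp.2 (by gcongr))

theorem BernoulliSubgaussian.sum (h0 : 0 ≤ ρ) (h1 : ρ ≤ 1) {κ : Type*} [DecidableEq κ]
    {B : Finset κ} {Y : κ → (ι → Bool) → ℝ} {c : κ → ℝ} {A : κ → Set ι}
    (hdep : ∀ k ∈ B, DependsOn (Y k) (A k)) (hA : (B : Set κ).PairwiseDisjoint A)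
    (hY : ∀ k ∈ B, BernoulliSubgaussian ρ (Y k) (c k)) :
    BernoulliSubgaussian ρ (fun η => ∑ k ∈ B, Y k η) (∑ k ∈ B, c k) := by
  intro t
  simp_rw [Finset.mul_sum, exp_sum]
  rw [bernoulliExpect_prod_of_dependsOn B _ A
    (fun k hk η ζ hηζ => congrArg (fun r => exp (t * r)) (hdep k hk hηζ)) hA,
    Finset.sum_mul, Finset.sum_div, exp_sum]
  exact Finset.prod_le_prod (fun k _ => bernoulliExpect_nonneg h0 h1 fun _ => (exp_pos _).le)
    fun k hk => hY k hk t

theorem BernoulliSubgaussian.bernoulliExpect_cosh_le {Y : (ι → Bool) → ℝ} {c : ℝ}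
    (hY : BernoulliSubgaussian ρ Y c) (t : ℝ) :
    bernoulliExpect ρ (fun η => cosh (t * Y η)) ≤ exp (c * t ^ 2 / 2) := by
  have hcosh : ∀ η, cosh (t * Y η) = 2⁻¹ * (exp (t * Y η) + exp (-t * Y η)) := fun η => by
    rw [cosh_eq, neg_mul]; ring
  simp_rw [hcosh]
  rw [bernoulliExpect_const_mul, bernoulliExpect_add]
  have := hY (-t)
  rw [neg_sq] at this
  linarith [hY t]

theorem BernoulliSubgaussian.bernoulliExpect_pow_le (h0 : 0 ≤ ρ) (h1 : ρ ≤ 1)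
    {Y : (ι → Bool) → ℝ} {c : ℝ} (hc : 0 < c) (hY : BernoulliSubgaussian ρ Y c) (m : ℕ) :
    bernoulliExpect ρ (fun η => Y η ^ (2 * m)) ≤ m.factorial * (exp 1 * c) ^ m := by
  rcases m.eq_zero_or_pos with rfl | hm
  · simp [bernoulliExpect_const]
  -- optimise the Chernoff-type bound `Y ^ (2m) ≤ (2m)! t ^ (-2m) cosh (t Y)` at `t² = 2m / c`
  have hm' : (0 : ℝ) < m := by exact_mod_cast hm
  set t := sqrt (2 * m / c)
  have ht : 0 < t := sqrt_pos.2 (by positivity)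
  have ht2 : t ^ 2 = 2 * m / c := sq_sqrt (by positivity)
  have hpt : ∀ η, Y η ^ (2 * m) ≤ (2 * m).factorial / t ^ (2 * m) * cosh (t * Y η) := fun η => by
    have := pow_two_mul_div_factorial_le_cosh (t * Y η) m
    rw [mul_pow, div_le_iff₀ (by positivity)] at this
    rw [div_mul_eq_mul_div, le_div_iff₀ (by positivity)]
    linarith
  have hfact : ((2 * m).factorial : ℝ) ≤ (2 * m) ^ m * m.factorial := by
    exact_mod_cast Nat.factorial_two_mul_le m
  calc bernoulliExpect ρ (fun η => Y η ^ (2 * m))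
      ≤ bernoulliExpect ρ (fun η => (2 * m).factorial / t ^ (2 * m) * cosh (t * Y η)) :=
        bernoulliExpect_mono h0 h1 hpt
    _ ≤ (2 * m).factorial / t ^ (2 * m) * exp (c * t ^ 2 / 2) := by
        rw [bernoulliExpect_const_mul]
        gcongr
        exact hY.bernoulliExpect_cosh_le t
    _ = (2 * m).factorial * (c / (2 * m)) ^ m * exp 1 ^ m := by
        have hexpm : c * t ^ 2 / 2 = m := by rw [ht2]; field_simp
        rw [pow_mul, hexpm, ht2, ← exp_one_pow, div_pow, div_pow]
        field_simp
    _ ≤ (2 * m) ^ m * m.factorial * (c / (2 * m)) ^ m * exp 1 ^ m := by gcongr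
    _ = m.factorial * (exp 1 * c) ^ m := by
        rw [div_pow, mul_pow]
        field_simp
        ring

theorem BernoulliSubgaussian.bernoulliExpect_exp_sq_le (h0 : 0 ≤ ρ) (h1 : ρ ≤ 1)
    {Y : (ι → Bool) → ℝ} {c : ℝ} (hc : 0 < c) (hY : BernoulliSubgaussian ρ Y c) :
    bernoulliExpect ρ (fun η => exp ((2 * exp 1 * c)⁻¹ * Y η ^ 2)) ≤ 2 := by
  set β := (2 * exp 1 * c)⁻¹ with hβ
  have hexp (x : ℝ) : HasSum (fun m => x ^ m / m.factorial) (exp x) := by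
    rw [exp_eq_exp_ℝ]
    exact NormedSpace.expSeries_div_hasSum_exp x
  have hseries : HasSum (fun m => β ^ m / m.factorial * bernoulliExpect ρ (fun η => Y η ^ (2 * m)))
      (bernoulliExpect ρ (fun η => exp (β * Y η ^ 2))) := by
    have hterm : (fun m => β ^ m / m.factorial * bernoulliExpect ρ (fun η => Y η ^ (2 * m)))
        = fun m => ∑ η, bernoulliWeight ρ η * ((β * Y η ^ 2) ^ m / m.factorial) := by
      funext m
      rw [bernoulliExpect, Finset.mul_sum]
      exact Finset.sum_congr rfl fun η _ => by ring
    rw [hterm]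
    exact hasSum_sum fun η _ => (hexp (β * Y η ^ 2)).mul_left (bernoulliWeight ρ η)
  refine hasSum_le (fun m => ?_) hseries hasSum_geometric_two
  calc β ^ m / m.factorial * bernoulliExpect ρ (fun η => Y η ^ (2 * m))
      ≤ β ^ m / m.factorial * (m.factorial * (exp 1 * c) ^ m) := by
        gcongr
        exact hY.bernoulliExpect_pow_le h0 h1 hc m
    _ = (1 / 2) ^ m := by
        rw [← mul_assoc, div_mul_cancel₀ _ (by positivity), ← mul_pow]
        congr 1
        rw [hβ]
        field_simp

theorem bernoulliExpect_exp_sq_sum_le (h0 : 0 ≤ ρ) (h1 : ρ ≤ 1) {κ : Type*} [Fintype κ]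
    [Nonempty κ] {β C : ℝ} (hβ : 0 ≤ β) (Y : κ → (ι → Bool) → ℝ)
    (hY : ∀ k, bernoulliExpect ρ (fun η => exp (β * Y k η ^ 2)) ≤ C) :
    bernoulliExpect ρ (fun η => exp (β / Fintype.card κ ^ 2 * (∑ k, Y k η) ^ 2)) ≤ C := by
  have hK : (Fintype.card κ : ℝ) ≠ 0 := by exact_mod_cast Fintype.card_ne_zero
  calc bernoulliExpect ρ (fun η => exp (β / Fintype.card κ ^ 2 * (∑ k, Y k η) ^ 2))
      ≤ bernoulliExpect ρ (fun η => (Fintype.card κ : ℝ)⁻¹ * ∑ k, exp (β * Y k η ^ 2)) :=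
        bernoulliExpect_mono h0 h1 fun η => exp_div_sq_mul_sq_sum_le hβ _
    _ = (Fintype.card κ : ℝ)⁻¹ * ∑ k, bernoulliExpect ρ (fun η => exp (β * Y k η ^ 2)) := by
        rw [bernoulliExpect_const_mul, bernoulliExpect_sum]
    _ ≤ (Fintype.card κ : ℝ)⁻¹ * ∑ _k : κ, C := by gcongr with k; exact hY k
    _ = C := by simp [hK]

end Subgaussian

theorem CylFun.exists_abs_le {d : ℕ} (h : CylFun d) : ∃ M, 0 < M ∧ ∀ η, |h.toFun η| ≤ M := by
  let ext : (h.supp → Bool) → ZCfg d := fun σ z => if hz : z ∈ h.supp then σ ⟨z, hz⟩ else false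
  refine ⟨∑ σ : h.supp → Bool, |h.toFun (ext σ)| + 1, by positivity, fun η => ?_⟩
  rw [h.cyl η (ext fun z => η z.1) fun z hz => by simp [ext, hz]]
  linarith [Finset.single_le_sum (f := fun σ => |h.toFun (ext σ)|) (fun σ _ => abs_nonneg _)
    (Finset.mem_univ fun z => η z.1)]

theorem FitsCube.injOn_toTorus {d n : ℕ} {S : Finset (Fin d → ℤ)} (hS : FitsCube d S n) :
    Set.InjOn (toTorus (n := n)) (S : Set (Fin d → ℤ)) := by
  obtain ⟨a, ha⟩ := hS
  intro z hz z' hz' hzz'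
  funext i
  have hdvd : (n : ℤ) ∣ z' i - z i :=
    (ZMod.intCast_eq_intCast_iff_dvd_sub _ _ _).1 (congrFun hzz' i)
  have hzi := ha z hz i
  have hzi' := ha z' hz' i
  have hzero := Int.eq_zero_of_abs_lt_dvd hdvd (by rw [abs_lt]; omega)
  omega

theorem cylAt_dependsOn {d n : ℕ} (h : CylFun d) (x : Torus d n) :
    DependsOn (cylAt h x) ↑(x +ᵥ h.supp.image (toTorus (n := n))) := fun _ _ hηζ =>
  h.cyl _ _ fun z hz =>
    hηζ _ (Finset.mem_vadd_finset.2 ⟨toTorus z, Finset.mem_image_of_mem _ hz, rfl⟩)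

section Torus

variable {d n : ℕ} [NeZero n] {ρ : ℝ}

theorem abs_le_supNorm (F : Torus d n → ℝ) (x : Torus d n) : |F x| ≤ supNorm F :=
  le_ciSup (f := fun x => |F x|) (Set.finite_range _).bddAbove x

theorem supNorm_nonneg (F : Torus d n → ℝ) : 0 ≤ supNorm F :=
  (abs_nonneg _).trans (abs_le_supNorm F 0)

theorem sum_sq_inv_sqrt_mul_le {J : Torus d n → ℝ} {s : ℝ} (hJ : ∀ x, |J x| ≤ s) :
    ∑ x : Torus d n, ((√((n : ℝ) ^ d))⁻¹ * J x) ^ 2 ≤ s ^ 2 := by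
  have hN : (0 : ℝ) < (n : ℝ) ^ d := pow_pos (Nat.cast_pos.2 (NeZero.pos n)) d
  have hcard : (Fintype.card (Torus d n) : ℝ) = (n : ℝ) ^ d := by simp
  calc ∑ x : Torus d n, ((√((n : ℝ) ^ d))⁻¹ * J x) ^ 2
      = ∑ x : Torus d n, J x ^ 2 / (n : ℝ) ^ d := by
        refine Finset.sum_congr rfl fun x _ => ?_
        rw [mul_pow, inv_pow, sq_sqrt hN.le, inv_mul_eq_div]
    _ ≤ ∑ _x : Torus d n, s ^ 2 / (n : ℝ) ^ d := Finset.sum_le_sum fun x _ =>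
        div_le_div_of_nonneg_right (sq_le_sq' (abs_le.1 (hJ x)).1 (abs_le.1 (hJ x)).2) hN.le
    _ = s ^ 2 := by
        rw [Finset.sum_const, Finset.card_univ, nsmul_eq_mul, hcard]
        field_simp

theorem expect_cylAt (h : CylFun d) (hfit : FitsCube d h.supp n) (x : Torus d n) :
    expect d n ρ (cylAt h x) = h.tilde ρ := by
  have hφ : Function.Injective fun z : h.supp => x + toTorus (n := n) z.1 := fun z z' hzz' =>
    Subtype.ext (hfit.injOn_toTorus z.2 z'.2 (add_left_cancel hzz'))
  refine Eq.trans ?_ (bernoulliExpect_comp_of_injective (ρ := ρ) hφ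
    fun σ => h.toFun fun z => if hz : z ∈ h.supp then σ ⟨z, hz⟩ else false)
  congr 1
  funext η
  exact h.cyl _ _ fun z hz => by simp [liftCfg, shiftCfg, hz]

theorem bernoulliSubgaussian_cylAt_sub_tilde (h0 : 0 ≤ ρ) (h1 : ρ ≤ 1) (h : CylFun d) {M : ℝ}
    (hM : 0 < M) (hhM : ∀ η, |h.toFun η| ≤ M) (hfit : FitsCube d h.supp n) (x : Torus d n) :
    BernoulliSubgaussian ρ (fun η => cylAt h x η - h.tilde ρ) ((2 * M) ^ 2) := by
  have hmean : bernoulliExpect ρ (cylAt h x) = h.tilde ρ := expect_cylAt h hfit x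
  refine bernoulliSubgaussian_of_abs_le h0 h1 (by positivity) (fun η => ?_) ?_
  · have htilde : |h.tilde ρ| ≤ M := hmean ▸ abs_bernoulliExpect_le h0 h1 fun η => hhM _
    calc |cylAt h x η - h.tilde ρ| ≤ |cylAt h x η| + |h.tilde ρ| := abs_sub _ _
      _ ≤ M + M := add_le_add (hhM _) htilde
      _ = 2 * M := by ring
  · rw [bernoulliExpect_sub_const]
    exact sub_eq_zero.2 hmean

theorem bernoulliSubgaussian_sum_cylAt (h0 : 0 ≤ ρ) (h1 : ρ ≤ 1) (h : CylFun d) {M : ℝ}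
    (hM : 0 < M) (hhM : ∀ η, |h.toFun η| ≤ M) (hfit : FitsCube d h.supp n) (a : Torus d n → ℝ)
    {B : Finset (Torus d n)}
    (hB : (B : Set (Torus d n)).PairwiseDisjoint fun x =>
      ((x +ᵥ h.supp.image toTorus : Finset (Torus d n)) : Set (Torus d n))) :
    BernoulliSubgaussian ρ (fun η => ∑ x ∈ B, a x * (cylAt h x η - h.tilde ρ))
      ((2 * M) ^ 2 * ∑ x, a x ^ 2) := by
  refine (BernoulliSubgaussian.sum h0 h1 (Y := fun x η => a x * (cylAt h x η - h.tilde ρ))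
    (fun x _ _ _ hηζ => congrArg (fun r => a x * (r - h.tilde ρ)) (cylAt_dependsOn h x hηζ)) hB
    fun x _ => (bernoulliSubgaussian_cylAt_sub_tilde h0 h1 h hM hhM hfit x).const_mul (a x)).mono ?_
  rw [← Finset.sum_mul, mul_comm]
  gcongr
  exact B.subset_univ

theorem expect_sq_mul_le_of_abs_le (h0 : 0 ≤ ρ) (h1 : ρ ≤ 1) (h : CylFun d) {M : ℝ}
    (hM : 0 < M) (hhM : ∀ η, |h.toFun η| ≤ M) (hfit : FitsCube d h.supp n)
    {J : Torus d n → ℝ} {s : ℝ} (hs : 0 < s) (hJ : ∀ x, |J x| ≤ s) {f : Cfg d n → ℝ}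
    (hf : IsDensity d n ρ f) :
    expect d n ρ (fun η =>
        ((√((n : ℝ) ^ d))⁻¹ * ∑ x, J x * (cylAt h x η - h.tilde ρ)) ^ 2 * f η)
      ≤ 8 * exp 1 * ((#h.supp ^ 2 + 1 : ℕ) : ℝ) ^ 2 * M ^ 2 * (entropy d n ρ f + 1) * s ^ 2 := by
  set K := #h.supp ^ 2 + 1
  set a : Torus d n → ℝ := fun x => (√((n : ℝ) ^ d))⁻¹ * J x
  set X : Cfg d n → ℝ := fun η => (√((n : ℝ) ^ d))⁻¹ * ∑ x, J x * (cylAt h x η - h.tilde ρ)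
  set c := (2 * M) ^ 2 * s ^ 2
  obtain ⟨col, hcol⟩ := exists_coloring_disjoint_vadd (h.supp.image (toTorus (n := n))) (K := K)
    (Nat.lt_succ_of_le (Nat.pow_le_pow_left Finset.card_image_le 2))
  set Y : Fin K → Cfg d n → ℝ := fun k η =>
    ∑ x ∈ Finset.univ.filter (col · = k), a x * (cylAt h x η - h.tilde ρ)
  have hXY : ∀ η, X η = ∑ k, Y k η := fun η => by
    simp only [X, Y, a, Finset.sum_fiberwise, Finset.mul_sum, mul_assoc]
  have hY : ∀ k, BernoulliSubgaussian ρ (Y k) c := fun k =>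
    (bernoulliSubgaussian_sum_cylAt h0 h1 h hM hhM hfit a
      fun x hx y hy hxy => Finset.disjoint_coe.2 (hcol x y (by simp_all) hxy)).mono
      (mul_le_mul_of_nonneg_left (sum_sq_inv_sqrt_mul_le hJ) (by positivity))
  have hexp : bernoulliExpect ρ (fun η => exp ((2 * exp 1 * c)⁻¹ / K ^ 2 * X η ^ 2)) ≤ 2 := by
    simpa only [Fintype.card_fin, ← hXY] using bernoulliExpect_exp_sq_sum_le h0 h1
      (by positivity) Y fun k => (hY k).bernoulliExpect_exp_sq_le h0 h1 (by positivity)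
  calc bernoulliExpect ρ (fun η => X η ^ 2 * f η)
      ≤ ((2 * exp 1 * c)⁻¹ / K ^ 2)⁻¹ * (entropy d n ρ f + 1) :=
        bernoulliExpect_mul_le_of_exp_le h0 h1 hf.1 hf.2 (by positivity) hexp
    _ = 8 * exp 1 * (K : ℝ) ^ 2 * M ^ 2 * (entropy d n ρ f + 1) * s ^ 2 := by
        simp only [c]
        field_simp
        ring

end Torus

/-- `∫ (n^{-d/2} Σ_x J_x (h(τ_x η) - ~h(ρ)))² f dν ≤ C₀ (H_n(f)+1) ‖J‖²_∞`,
with a constant `C₀` depending only on `h`. -/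
theorem cylinder_field_square_bound :
    ∀ d : ℕ, 1 ≤ d → ∀ h : CylFun d,
    ∃ C₀ : ℝ, ∀ (n : ℕ) [NeZero n], ∀ ρ : ℝ, 0 < ρ → ρ < 1 →
      FitsCube d h.supp n →
      ∀ J : Torus d n → ℝ, ∀ f : Cfg d n → ℝ, IsDensity d n ρ f →
        expect d n ρ (fun η =>
          ((Real.sqrt ((n : ℝ) ^ d))⁻¹ *
            ∑ x : Torus d n, J x * (cylAt h x η - h.tilde ρ)) ^ 2 * f η)
          ≤ C₀ * (entropy d n ρ f + 1) * supNorm J ^ 2 := by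
  intro d _ h
  obtain ⟨M, hM, hhM⟩ := h.exists_abs_le
  refine ⟨8 * exp 1 * ((#h.supp ^ 2 + 1 : ℕ) : ℝ) ^ 2 * M ^ 2, ?_⟩
  intro n _ ρ h0 h1 hfit J f hf
  rcases (supNorm_nonneg J).eq_or_lt with hJ | hJ
  · have hJ0 : ∀ x, J x = 0 := fun x => abs_nonpos_iff.1 (hJ ▸ abs_le_supNorm J x)
    simp only [hJ0, zero_mul, Finset.sum_const_zero, mul_zero, zero_pow two_ne_zero, ← hJ]
    exact (bernoulliExpect_const 0).le
  · exact expect_sq_mul_le_of_abs_le h0.le h1.le h hM hhM hfit hJ (abs_le_supNorm J) hf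
end

section
/- Assume the gradient condition: for each 1 ≤ j ≤ d there are cylinder functions h_{j,k}, 1 ≤ k ≤ d, with c_j(η)(η_{e_j} − η_0) = Σ_{k=1}^d { (τ_{e_k} h_{j,k})(η) − h_{j,k}(η) } for all η. Then for every function F : 𝕋^d → ℝ on the continuous torus and every η ∈ Ω_n, (L_n X^n(F))(η) = (a_n n^d)^{−1/2} Σ_{j,k=1}^d Σ_{x∈T^d_n} { h_{j,k}(τ_x η) − ~h_{j,k}(ρ) } (Δ^n_{j,k} F)(x/n) + (a_n/n²)(a_n n^d)^{−1/2} Σ_{x∈T^d_n} (η_x − ρ) (Δ_n F)(x/n), where (Δ^n_{j,k}F)(x/n) = n² { F((x+e_j)/n) − F(x/n) − F((x+e_j−e_k)/n) + F((x−e_k)/n) } and Δ_n F = Σ_{j=1}^d Δ^n_{j,j} F. -/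
open Finset

/-- The point `x/n` of the continuous torus `𝕋^d` associated to `x ∈ T^d_n`. -/
noncomputable def embedT (d n : ℕ) [NeZero n] (x : Torus d n) : Fin d → AddCircle (1 : ℝ) :=
  fun i => (↑(((x i).val : ℝ) / (n : ℝ)) : AddCircle (1 : ℝ))

/-- The density fluctuation field `X^n(F)(η) = (a_n n^d)^{-1/2} Σ_x F(x/n)(η_x - ρ)`. -/
noncomputable def fluctField (d n : ℕ) [NeZero n] (ρ a : ℝ)
    (F : (Fin d → AddCircle (1 : ℝ)) → ℝ) (η : Cfg d n) : ℝ :=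
  (Real.sqrt (a * (n : ℝ) ^ d))⁻¹ * ∑ x : Torus d n, F (embedT d n x) * (cval η x - ρ)

/-- The discrete second difference `(Δ^n_{j,k} F)(x/n)`. -/
noncomputable def discLap (d n : ℕ) [NeZero n] (j k : Fin d)
    (F : (Fin d → AddCircle (1 : ℝ)) → ℝ) (x : Torus d n) : ℝ :=
  (n : ℝ) ^ 2 * (F (embedT d n (x + unitT d n j)) - F (embedT d n x)
    - F (embedT d n (x + unitT d n j - unitT d n k)) + F (embedT d n (x - unitT d n k)))

/-!
A jump across the bond `(x, x + e_j)` changes `X^n(F)` by the discrete gradient of `F` times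
`η_x - η_{x+e_j}`. The gradient condition turns `c_j(τ_x η)(η_{x+e_j} - η_x)` into a sum of
discrete differences of `h_{j,k}(τ_x η)` in the directions `e_k`, and summation by parts on the
torus moves these differences onto `F`, producing `Δ^n_{j,k} F`. A voter flip at `x` changes
`X^n(F)` by `F(x/n)(1 - 2η_x)`, and `(η_y - η_x)²(1 - 2η_x) = η_y - η_x`, so the voter part is
`F` paired with the discrete Laplacian of `η`; summation by parts gives `Δ_n F`. The constants
`ρ` and `~h_{j,k}(ρ)` come for free because each `Δ^n_{j,k} F` sums to zero over the torus.
-/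

open scoped fwdDiff

section SummationByParts

variable {G R : Type*} [AddCommGroup G] [Fintype G]

theorem sum_fwdDiff [AddCommGroup R] (t : G) (f : G → R) : ∑ x, Δ_[t] f x = 0 := by
  simp only [fwdDiff, Finset.sum_sub_distrib,
    Fintype.sum_equiv (Equiv.addRight t) (fun x => f (x + t)) f (fun _ => rfl), sub_self]

theorem sum_fwdDiff_mul [Ring R] (t : G) (f g : G → R) :
    ∑ x, Δ_[t] f x * g x = ∑ x, f x * Δ_[-t] g x := by
  have hshift : ∑ x, f (x + t) * g x = ∑ x, f x * g (x + -t) :=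
    Fintype.sum_equiv (Equiv.addRight t) _ _ fun x => by simp
  simp only [fwdDiff, sub_mul, mul_sub, Finset.sum_sub_distrib, hshift]

theorem sum_mul_fwdDiff [Ring R] (t : G) (f g : G → R) :
    ∑ x, f x * Δ_[t] g x = ∑ x, Δ_[-t] f x * g x := by
  rw [sum_fwdDiff_mul, neg_neg]

end SummationByParts

theorem Finset.sum_sub_const_mul_of_sum_eq_zero {ι R : Type*} [Ring R] (s : Finset ι)
    (u g : ι → R) (r : R) (hg : ∑ i ∈ s, g i = 0) :
    ∑ i ∈ s, (u i - r) * g i = ∑ i ∈ s, u i * g i := by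
  simp only [sub_mul, Finset.sum_sub_distrib, ← Finset.mul_sum, hg, mul_zero, sub_zero]

section Torus

variable {d n : ℕ}

theorem toTorus_add (y z : Fin d → ℤ) :
    (toTorus (y + z) : Torus d n) = toTorus y + toTorus z := by
  funext i
  simp [toTorus]

theorem toTorus_zero : (toTorus (0 : Fin d → ℤ) : Torus d n) = 0 := by
  funext i
  simp [toTorus]

theorem toTorus_unitZ (j : Fin d) : (toTorus (unitZ d j) : Torus d n) = unitT d n j := by
  funext i
  simp only [toTorus, unitZ, unitT]
  split <;> simp

theorem zshift_liftCfg_shiftCfg (y : Fin d → ℤ) (x : Torus d n) (η : Cfg d n) :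
    zshift y (liftCfg (shiftCfg x η)) = liftCfg (shiftCfg (x + toTorus y) η) := by
  funext z
  simp only [zshift, liftCfg, shiftCfg, toTorus_add, add_assoc]

theorem zval_liftCfg_shiftCfg (x : Torus d n) (z : Fin d → ℤ) (η : Cfg d n) :
    zval (liftCfg (shiftCfg x η)) z = cval η (x + toTorus z) := rfl

theorem cylAt_mul_fwdDiff_cval_of_gradient (c : CylFun d) (j : Fin d) (h : Fin d → CylFun d)
    (hgrad : ∀ ζ : ZCfg d, c.toFun ζ * (zval ζ (unitZ d j) - zval ζ 0)
      = ∑ k, ((h k).toFun (zshift (unitZ d k) ζ) - (h k).toFun ζ))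
    (x : Torus d n) (η : Cfg d n) :
    cylAt c x η * Δ_[unitT d n j] (cval η) x
      = ∑ k, Δ_[unitT d n k] (fun y => cylAt (h k) y η) x := by
  simpa only [cylAt, fwdDiff, zval_liftCfg_shiftCfg, zshift_liftCfg_shiftCfg, toTorus_unitZ,
    toTorus_zero, add_zero] using hgrad (liftCfg (shiftCfg x η))

theorem cval_swapCfg_sub (x y z : Torus d n) (η : Cfg d n) :
    cval (swapCfg x y η) z - cval η z
      = ((if z = x then 1 else 0) - (if z = y then 1 else 0)) * (cval η y - cval η x) := by
  unfold cval swapCfg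
  split_ifs <;> simp_all

theorem cval_flipCfg_sub (x z : Torus d n) (η : Cfg d n) :
    cval (flipCfg x η) z - cval η z = (if z = x then 1 else 0) * (1 - 2 * cval η x) := by
  by_cases hzx : z = x
  · subst hzx
    cases hz : η z <;> norm_num [cval, flipCfg, hz]
  · simp [cval, flipCfg, hzx]

theorem cval_sub_sq_mul (η : Cfg d n) (x y : Torus d n) :
    (cval η y - cval η x) ^ 2 * (1 - 2 * cval η x) = cval η y - cval η x := by
  simp only [cval]
  cases η y <;> cases η x <;> norm_num

variable [NeZero n] (ρ a : ℝ) (F : (Fin d → AddCircle (1 : ℝ)) → ℝ)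

theorem fluctField_sub (ζ η : Cfg d n) :
    fluctField d n ρ a F ζ - fluctField d n ρ a F η
      = (Real.sqrt (a * (n : ℝ) ^ d))⁻¹ *
          ∑ z, F (embedT d n z) * (cval ζ z - cval η z) := by
  simp only [fluctField, ← mul_sub, ← Finset.sum_sub_distrib]
  congr 1
  exact Finset.sum_congr rfl fun z _ => by ring

theorem fluctField_swapCfg_sub (x y : Torus d n) (η : Cfg d n) :
    fluctField d n ρ a F (swapCfg x y η) - fluctField d n ρ a F η
      = (Real.sqrt (a * (n : ℝ) ^ d))⁻¹ *
          ((F (embedT d n x) - F (embedT d n y)) * (cval η y - cval η x)) := by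
  simp [fluctField_sub, cval_swapCfg_sub, mul_sub, sub_mul, Finset.sum_sub_distrib]

theorem fluctField_flipCfg_sub (x : Torus d n) (η : Cfg d n) :
    fluctField d n ρ a F (flipCfg x η) - fluctField d n ρ a F η
      = (Real.sqrt (a * (n : ℝ) ^ d))⁻¹ * (F (embedT d n x) * (1 - 2 * cval η x)) := by
  simp [fluctField_sub, cval_flipCfg_sub]

theorem discLap_eq_neg_fwdDiff_fwdDiff (j k : Fin d) (x : Torus d n) :
    discLap d n j k F x
      = -(n : ℝ) ^ 2 * Δ_[-unitT d n k] (Δ_[unitT d n j] (F ∘ embedT d n)) x := by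
  simp only [discLap, fwdDiff, Function.comp_apply, ← sub_eq_add_neg, sub_add_eq_add_sub]
  ring

theorem discLap_self (j : Fin d) (x : Torus d n) :
    discLap d n j j F x
      = (n : ℝ) ^ 2 * (Δ_[unitT d n j] (F ∘ embedT d n) x
          + Δ_[-unitT d n j] (F ∘ embedT d n) x) := by
  simp only [discLap, fwdDiff, Function.comp_apply, ← sub_eq_add_neg, add_sub_cancel_right]
  ring

theorem sum_discLap (j k : Fin d) : ∑ x, discLap d n j k F x = 0 := by
  simp only [discLap_eq_neg_fwdDiff_fwdDiff, ← Finset.mul_sum, sum_fwdDiff, mul_zero]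

theorem sum_mul_discLap (j k : Fin d) (u : Torus d n → ℝ) :
    ∑ x, u x * discLap d n j k F x
      = -(n : ℝ) ^ 2 * ∑ x, Δ_[unitT d n k] u x * Δ_[unitT d n j] (F ∘ embedT d n) x := by
  rw [sum_fwdDiff_mul, Finset.mul_sum]
  exact Finset.sum_congr rfl fun x _ => by rw [discLap_eq_neg_fwdDiff_fwdDiff]; ring

theorem sum_mul_discLap_self (j : Fin d) (u : Torus d n → ℝ) :
    ∑ x, u x * discLap d n j j F x
      = (n : ℝ) ^ 2 * ∑ x, (F ∘ embedT d n) x * (Δ_[unitT d n j] u x + Δ_[-unitT d n j] u x) := by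
  have hsite : ∀ x, u x * discLap d n j j F x = (n : ℝ) ^ 2 *
      (u x * Δ_[unitT d n j] (F ∘ embedT d n) x + u x * Δ_[-unitT d n j] (F ∘ embedT d n) x) :=
    fun x => by rw [discLap_self]; ring
  rw [Finset.sum_congr rfl fun x _ => hsite x, ← Finset.mul_sum, Finset.sum_add_distrib,
    sum_mul_fwdDiff, sum_mul_fwdDiff, neg_neg, ← Finset.sum_add_distrib]
  exact congrArg _ (Finset.sum_congr rfl fun x _ => by ring)

theorem genS_fluctField (c : Fin d → CylFun d) (h : Fin d → Fin d → CylFun d)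
    (hgrad : ∀ (j : Fin d) (ζ : ZCfg d),
      (c j).toFun ζ * (zval ζ (unitZ d j) - zval ζ 0)
        = ∑ k : Fin d, ((h j k).toFun (zshift (unitZ d k) ζ) - (h j k).toFun ζ))
    (η : Cfg d n) :
    (n : ℝ) ^ 2 * genS d n c (fluctField d n ρ a F) η
      = (Real.sqrt (a * (n : ℝ) ^ d))⁻¹ *
          ∑ j, ∑ k, ∑ x, cylAt (h j k) x η * discLap d n j k F x := by
  set s := (Real.sqrt (a * (n : ℝ) ^ d))⁻¹
  have hsite : ∀ x j, cylAt (c j) x η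
        * (fluctField d n ρ a F (swapCfg x (x + unitT d n j) η) - fluctField d n ρ a F η)
      = -s * ∑ k, Δ_[unitT d n k] (fun y => cylAt (h j k) y η) x
          * Δ_[unitT d n j] (F ∘ embedT d n) x := by
    intro x j
    rw [← Finset.sum_mul, ← cylAt_mul_fwdDiff_cval_of_gradient (c j) j (h j) (hgrad j),
      fluctField_swapCfg_sub]
    simp only [fwdDiff, Function.comp_apply]
    ring
  simp only [genS, hsite, sum_mul_discLap, Finset.mul_sum]
  rw [Finset.sum_comm]
  refine Finset.sum_congr rfl fun j _ => ?_
  rw [Finset.sum_comm]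
  exact Finset.sum_congr rfl fun k _ => Finset.sum_congr rfl fun x _ => by ring

theorem genV_fluctField (η : Cfg d n) :
    genV d n (fluctField d n ρ a F) η
      = ((n : ℝ) ^ 2)⁻¹ * ((Real.sqrt (a * (n : ℝ) ^ d))⁻¹ *
          ∑ x, cval η x * ∑ j, discLap d n j j F x) := by
  set s := (Real.sqrt (a * (n : ℝ) ^ d))⁻¹
  have hsite : ∀ x j,
      (cval η (x + unitT d n j) - cval η x) ^ 2
          * (fluctField d n ρ a F (flipCfg x η) - fluctField d n ρ a F η)
        + (cval η (x - unitT d n j) - cval η x) ^ 2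
          * (fluctField d n ρ a F (flipCfg x η) - fluctField d n ρ a F η)
      = s * ((F ∘ embedT d n) x
          * (Δ_[unitT d n j] (cval η) x + Δ_[-unitT d n j] (cval η) x)) := by
    intro x j
    rw [fluctField_flipCfg_sub]
    simp only [fwdDiff, Function.comp_apply, ← sub_eq_add_neg]
    linear_combination (s * F (embedT d n x)) * (cval_sub_sq_mul η x (x + unitT d n j)
      + cval_sub_sq_mul η x (x - unitT d n j))
  have hn : (n : ℝ) ≠ 0 := Nat.cast_ne_zero.mpr (NeZero.ne n)
  have hlap : ∑ x, cval η x * ∑ j, discLap d n j j F x = (n : ℝ) ^ 2 * ∑ j, ∑ x,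
      (F ∘ embedT d n) x * (Δ_[unitT d n j] (cval η) x + Δ_[-unitT d n j] (cval η) x) := by
    simp only [Finset.mul_sum]
    rw [Finset.sum_comm]
    simp only [sum_mul_discLap_self, Finset.mul_sum]
  rw [genV, hlap, mul_left_comm s, inv_mul_cancel_left₀ (pow_ne_zero 2 hn)]
  simp only [hsite, Finset.mul_sum]
  rw [Finset.sum_comm]

end Torus

theorem generator_on_fluctuation_field_general
    (d n : ℕ) [NeZero n] (ρ : ℝ)
    (a : ℝ) (c : Fin d → CylFun d)
    (h : Fin d → Fin d → CylFun d)
    (hgrad : ∀ (j : Fin d) (η : ZCfg d),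
      (c j).toFun η * (zval η (unitZ d j) - zval η 0)
        = ∑ k : Fin d, ((h j k).toFun (zshift (unitZ d k) η) - (h j k).toFun η))
    (F : (Fin d → AddCircle (1 : ℝ)) → ℝ) (η : Cfg d n) :
    (n : ℝ) ^ 2 * genS d n c (fluctField d n ρ a F) η
        + a * genV d n (fluctField d n ρ a F) η
      = (Real.sqrt (a * (n : ℝ) ^ d))⁻¹ *
          (∑ j : Fin d, ∑ k : Fin d, ∑ x : Torus d n,
            (cylAt (h j k) x η - (h j k).tilde ρ) * discLap d n j k F x)
        + (a / (n : ℝ) ^ 2) * ((Real.sqrt (a * (n : ℝ) ^ d))⁻¹ *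
            ∑ x : Torus d n, (cval η x - ρ) * ∑ j : Fin d, discLap d n j j F x) := by
  have hΔ : ∑ x, ∑ j, discLap d n j j F x = 0 := by
    rw [Finset.sum_comm]
    exact Finset.sum_eq_zero fun j _ => sum_discLap F j j
  rw [genS_fluctField ρ a F c h hgrad, genV_fluctField,
    Finset.sum_sub_const_mul_of_sum_eq_zero _ _ _ _ hΔ]
  simp only [Finset.sum_sub_const_mul_of_sum_eq_zero _ _ _ _ (sum_discLap F _ _)]
  ring

/-- computation of `L_n X^n(F)` under the gradient condition. -/
theorem generator_on_fluctuation_field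
    (d n : ℕ) [NeZero n] (hd : 1 ≤ d) (ρ : ℝ) (hρ0 : 0 < ρ) (hρ1 : ρ < 1)
    (a : ℝ) (ha : 0 < a) (c : Fin d → CylFun d)
    (hcind0 : ∀ j η, (c j).toFun (zflip 0 η) = (c j).toFun η)
    (hcinde : ∀ j η, (c j).toFun (zflip (unitZ d j) η) = (c j).toFun η)
    (hcfit : ∀ j, FitsCube d (insert 0 (insert (unitZ d j) (c j).supp)) n)
    (h : Fin d → Fin d → CylFun d)
    (hhfit : ∀ j k, FitsCube d (h j k).supp n)
    (hgrad : ∀ (j : Fin d) (η : ZCfg d),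
      (c j).toFun η * (zval η (unitZ d j) - zval η 0)
        = ∑ k : Fin d, ((h j k).toFun (zshift (unitZ d k) η) - (h j k).toFun η))
    (F : (Fin d → AddCircle (1 : ℝ)) → ℝ) (η : Cfg d n) :
    (n : ℝ) ^ 2 * genS d n c (fluctField d n ρ a F) η
        + a * genV d n (fluctField d n ρ a F) η
      = (Real.sqrt (a * (n : ℝ) ^ d))⁻¹ *
          (∑ j : Fin d, ∑ k : Fin d, ∑ x : Torus d n,
            (cylAt (h j k) x η - (h j k).tilde ρ) * discLap d n j k F x)
        + (a / (n : ℝ) ^ 2) * ((Real.sqrt (a * (n : ℝ) ^ d))⁻¹ *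
            ∑ x : Torus d n, (cval η x - ρ) * ∑ j : Fin d, discLap d n j j F x) :=
  generator_on_fluctuation_field_general d n ρ a c h hgrad F η
end

section
/- Let c : {0,1}^{ℤ^d} → ℝ be a cylinder function and fix 1 ≤ j ≤ d. Suppose there exist an integer N ≥ 1, cylinder functions g_p and finitely supported functions m_p : ℤ^d → ℝ with Σ_{y∈ℤ^d} m_p(y) = 0, for 1 ≤ p ≤ N, such that c(η)(η_{e_j} − η_0) = Σ_{p=1}^N Σ_{y∈ℤ^d} m_p(y) (τ_y g_p)(η) for all η ∈ {0,1}^{ℤ^d}. Then there exist cylinder functions h_k, 1 ≤ k ≤ d, such that c(η)(η_{e_j} − η_0) = Σ_{k=1}^d { (τ_{e_k} h_k)(η) − h_k(η) } for all η ∈ {0,1}^{ℤ^d}. -/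
open Finset

/-!
Write `D_y g = τ_y g - g`. Since the weights `m_p` have total mass zero, the representation turns
the left-hand side into `Σ_p Σ_y m_p(y) D_y g_p`. The sums of nearest-neighbour gradients
`Σ_k D_{e_k} h_k` form a real vector space, and the `y` with `D_y g` in it for every cylinder
function `g` form a subgroup of `ℤ^d` (`D_{a+b} g = D_a (τ_b g) + D_b g`), which contains every
`e_k` and hence is all of `ℤ^d`.
-/

namespace CylFun

variable {d : ℕ}

instance : Zero (CylFun d) := ⟨⟨∅, fun _ => 0, fun _ _ _ => rfl⟩⟩

instance : Add (CylFun d) :=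
  ⟨fun f g => ⟨f.supp ∪ g.supp, fun η => f.toFun η + g.toFun η, fun η ζ h => by
    rw [f.cyl η ζ fun z hz => h z (mem_union_left _ hz),
      g.cyl η ζ fun z hz => h z (mem_union_right _ hz)]⟩⟩

instance : SMul ℝ (CylFun d) :=
  ⟨fun a f => ⟨f.supp, fun η => a * f.toFun η, fun η ζ h => by rw [f.cyl η ζ h]⟩⟩

def shift (y : Fin d → ℤ) (f : CylFun d) : CylFun d :=
  ⟨f.supp.image (y + ·), fun η => f.toFun (zshift y η),
    fun _ _ h => f.cyl _ _ fun z hz => h (y + z) (mem_image_of_mem _ hz)⟩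

def diff (y : Fin d → ℤ) (f : CylFun d) : ZCfg d → ℝ :=
  fun η => f.toFun (zshift y η) - f.toFun η

@[simp]
lemma diff_apply (y : Fin d → ℤ) (f : CylFun d) (η : ZCfg d) :
    f.diff y η = f.toFun (zshift y η) - f.toFun η := rfl

@[simp]
lemma zero_diff (y : Fin d → ℤ) : (0 : CylFun d).diff y = 0 := by
  funext η; exact sub_self 0

lemma diff_add (y : Fin d → ℤ) (f g : CylFun d) : (f + g).diff y = f.diff y + g.diff y := by
  funext η; change (f.toFun _ + g.toFun _) - (f.toFun η + g.toFun η) = _; simp; ring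

lemma diff_smul (y : Fin d → ℤ) (a : ℝ) (f : CylFun d) : (a • f).diff y = a • f.diff y := by
  funext η; change a * f.toFun _ - a * f.toFun η = _; simp; ring

@[simp]
lemma diff_zero (f : CylFun d) : f.diff 0 = 0 := by
  funext η
  rw [diff_apply, show zshift 0 η = η by funext z; simp [zshift], sub_self, Pi.zero_apply]

lemma diff_shift (a b : Fin d → ℤ) (f : CylFun d) :
    (f.shift b).diff a = f.diff (a + b) - f.diff b := by
  funext η
  simp only [diff_apply, shift, Pi.sub_apply]
  rw [show zshift b (zshift a η) = zshift (a + b) η by funext z; simp [zshift, add_assoc]]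
  ring

lemma diff_add_eq (a b : Fin d → ℤ) (f : CylFun d) :
    f.diff (a + b) = (f.shift b).diff a + f.diff b := by
  rw [diff_shift, sub_add_cancel]

lemma diff_neg (a : Fin d → ℤ) (f : CylFun d) : f.diff (-a) = -(f.shift (-a)).diff a := by
  rw [diff_shift, add_neg_cancel, diff_zero, zero_sub, neg_neg]

lemma sum_mul_shift_eq_sum_smul_diff (f : CylFun d) (m : (Fin d → ℤ) →₀ ℝ)
    (hm : ∑ y ∈ m.support, m y = 0) :
    (fun η => ∑ y ∈ m.support, m y * f.toFun (zshift y η)) = ∑ y ∈ m.support, m y • f.diff y := by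
  funext η
  simp only [Finset.sum_apply, Pi.smul_apply, diff_apply, smul_eq_mul, mul_sub,
    sum_sub_distrib, ← sum_mul, hm, zero_mul, sub_zero]

end CylFun

open CylFun

def nnGradients (d : ℕ) : Submodule ℝ (ZCfg d → ℝ) where
  carrier := {F | ∃ h : Fin d → CylFun d, F = ∑ k, (h k).diff (unitZ d k)}
  zero_mem' := ⟨0, by simp⟩
  add_mem' := by
    rintro _ _ ⟨u, rfl⟩ ⟨v, rfl⟩
    exact ⟨u + v, by simp [diff_add, sum_add_distrib]⟩
  smul_mem' := by
    rintro a _ ⟨u, rfl⟩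
    exact ⟨a • u, by simp [diff_smul, smul_sum]⟩

lemma diff_unitZ_mem_nnGradients {d : ℕ} (k : Fin d) (f : CylFun d) :
    f.diff (unitZ d k) ∈ nnGradients d := by
  classical
  refine ⟨Pi.single k f, ?_⟩
  rw [sum_eq_single k (fun k' _ hk' => by simp [hk']) (by simp), Pi.single_eq_same]

def gradientDirections (d : ℕ) : AddSubgroup (Fin d → ℤ) where
  carrier := {y | ∀ f : CylFun d, f.diff y ∈ nnGradients d}
  zero_mem' f := by simp
  add_mem' {a b} ha hb f := by
    rw [diff_add_eq]; exact add_mem (ha _) (hb f)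
  neg_mem' {a} ha f := by
    rw [diff_neg]; exact neg_mem (ha _)

lemma gradientDirections_eq_top (d : ℕ) : gradientDirections d = ⊤ := by
  classical
  refine eq_top_iff.2 fun y _ => ?_
  rw [pi_eq_sum_univ y]
  refine sum_mem fun i _ => AddSubgroup.zsmul_mem _ (fun f => ?_) _
  convert diff_unitZ_mem_nnGradients i f using 2
  funext k; simp [unitZ, eq_comm]

lemma diff_mem_nnGradients {d : ℕ} (y : Fin d → ℤ) (f : CylFun d) :
    f.diff y ∈ nnGradients d := by
  have hy : y ∈ gradientDirections d := gradientDirections_eq_top d ▸ AddSubgroup.mem_top y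
  exact hy f

theorem gradient_condition_from_mean_zero_general
    (d : ℕ) (c : CylFun d) (j : Fin d) (N : ℕ)
    (g : Fin N → CylFun d) (m : Fin N → ((Fin d → ℤ) →₀ ℝ))
    (hm : ∀ p, ∑ y ∈ (m p).support, m p y = 0)
    (hrep : ∀ η : ZCfg d,
      c.toFun η * (zval η (unitZ d j) - zval η 0)
        = ∑ p : Fin N, ∑ y ∈ (m p).support, m p y * (g p).toFun (zshift y η)) :
    ∃ h : Fin d → CylFun d, ∀ η : ZCfg d,
      c.toFun η * (zval η (unitZ d j) - zval η 0)
        = ∑ k : Fin d, ((h k).toFun (zshift (unitZ d k) η) - (h k).toFun η) := by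
  have hsum : (fun η => c.toFun η * (zval η (unitZ d j) - zval η 0))
      = ∑ p, ∑ y ∈ (m p).support, m p y • (g p).diff y := by
    funext η
    rw [hrep η, Finset.sum_apply]
    exact sum_congr rfl fun p _ => congrFun (sum_mul_shift_eq_sum_smul_diff _ _ (hm p)) η
  obtain ⟨h, hh⟩ : (fun η => c.toFun η * (zval η (unitZ d j) - zval η 0)) ∈ nnGradients d :=
    hsum ▸ sum_mem fun p _ => sum_mem fun y _ => Submodule.smul_mem _ _ (diff_mem_nnGradients _ _)
  exact ⟨h, fun η => by simpa [Finset.sum_apply] using congrFun hh η⟩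

/-- the usual gradient condition (mean-zero signed measures applied to
translates of cylinder functions) implies the nearest-neighbour gradient
decomposition. -/
theorem gradient_condition_from_mean_zero
    (d : ℕ) (c : CylFun d) (j : Fin d) (N : ℕ) (hN : 1 ≤ N)
    (g : Fin N → CylFun d) (m : Fin N → ((Fin d → ℤ) →₀ ℝ))
    (hm : ∀ p, ∑ y ∈ (m p).support, m p y = 0)
    (hrep : ∀ η : ZCfg d,
      c.toFun η * (zval η (unitZ d j) - zval η 0)
        = ∑ p : Fin N, ∑ y ∈ (m p).support, m p y * (g p).toFun (zshift y η)) :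
    ∃ h : Fin d → CylFun d, ∀ η : ZCfg d,
      c.toFun η * (zval η (unitZ d j) - zval η 0)
        = ∑ k : Fin d, ((h k).toFun (zshift (unitZ d k) η) - (h k).toFun η) :=
  gradient_condition_from_mean_zero_general d c j N g m hm hrep
end
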